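/- arXiv:1906.10936 — 4 statements merged into one kernel-verified Lean document; each statement's English description precedes it below -/
import Mathlib

section
/- Let M = (E, ρ) be a matroid and let X ⊆ Y ⊆ E be two sets such that X is a cyclic set of M and Y is a flat of M. Then the cyclic flats of the minor M|Y/X are exactly the sets Z ⊆ Y − X such that Z ∪ X is a cyclic flat of M, and for each such Z the rank of Z in M|Y/X equals ρ(Z ∪ X) − ρ(X). -/
open Finset

structure FinMatroid (α : Type*) [DecidableEq α] where
  E : Finset α
  rk : Finset α → ℕ
  rk_le_card : ∀ A, A ⊆ E → rk A ≤ A.card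
  rk_mono : ∀ A B, A ⊆ B → B ⊆ E → rk A ≤ rk B
  rk_submod : ∀ A B, A ⊆ E → B ⊆ E → rk (A ∪ B) + rk (A ∩ B) ≤ rk A + rk B

namespace FinMatroid

variable {α : Type*} [DecidableEq α]

/-- The closure operator `cl(A) = {e ∈ E : ρ(A ∪ {e}) = ρ(A)}`. -/
def cl (M : FinMatroid α) (A : Finset α) : Finset α :=
  M.E.filter fun e => M.rk (insert e A) = M.rk A

/-- The cyclic operator `cyc(A) = {e ∈ A : ρ(A − {e}) = ρ(A)}`. -/
def cyc (M : FinMatroid α) (A : Finset α) : Finset α :=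
  A.filter fun e => M.rk (A.erase e) = M.rk A

/-- A flat is a set fixed by the closure operator. -/
def IsFlat (M : FinMatroid α) (F : Finset α) : Prop :=
  F ⊆ M.E ∧ M.cl F = F

/-- A cyclic set is a set fixed by the cyclic operator. -/
def IsCyclic (M : FinMatroid α) (U : Finset α) : Prop :=
  U ⊆ M.E ∧ M.cyc U = U

/-- A cyclic flat is a set fixed by both the closure and the cyclic operators. -/
def IsCyclicFlat (M : FinMatroid α) (Z : Finset α) : Prop :=
  Z ⊆ M.E ∧ M.cl Z = Z ∧ M.cyc Z = Z

/-- The minor `M|Y/X`: restriction to `Y` followed by contraction of `X`. -/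
def minor (M : FinMatroid α) (X Y : Finset α) (hXY : X ⊆ Y) (hY : Y ⊆ M.E) :
    FinMatroid α where
  E := Y \ X
  rk A := M.rk (A ∪ X) - M.rk X
  rk_le_card := by
    intro A hA
    have hAE : A ⊆ M.E := fun a ha => hY (mem_sdiff.mp (hA ha)).1
    have hXE : X ⊆ M.E := hXY.trans hY
    have h1 := M.rk_submod A X hAE hXE
    have h2 := M.rk_le_card A hAE
    show M.rk (A ∪ X) - M.rk X ≤ A.card
    omega
  rk_mono := by
    intro A B hAB hB
    have hBE : B ⊆ M.E := fun a ha => hY (mem_sdiff.mp (hB ha)).1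
    have hBX : B ∪ X ⊆ M.E := union_subset hBE (hXY.trans hY)
    have := M.rk_mono (A ∪ X) (B ∪ X) (union_subset_union hAB Subset.rfl) hBX
    show M.rk (A ∪ X) - M.rk X ≤ M.rk (B ∪ X) - M.rk X
    omega
  rk_submod := by
    intro A B hA hB
    have hAE : A ⊆ M.E := fun a ha => hY (mem_sdiff.mp (hA ha)).1
    have hBE : B ⊆ M.E := fun a ha => hY (mem_sdiff.mp (hB ha)).1
    have hXE : X ⊆ M.E := hXY.trans hY
    have hAX : A ∪ X ⊆ M.E := union_subset hAE hXE
    have hBX : B ∪ X ⊆ M.E := union_subset hBE hXE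
    have hsub := M.rk_submod (A ∪ X) (B ∪ X) hAX hBX
    have e1 : (A ∪ X) ∪ (B ∪ X) = (A ∪ B) ∪ X := by
      ext x; simp only [mem_union]; tauto
    have e2 : (A ∪ X) ∩ (B ∪ X) = (A ∩ B) ∪ X := by
      ext x; simp only [mem_union, mem_inter]; tauto
    rw [e1, e2] at hsub
    have h1 : M.rk X ≤ M.rk (A ∪ X) := M.rk_mono X _ subset_union_right hAX
    have h2 : M.rk X ≤ M.rk (B ∪ X) := M.rk_mono X _ subset_union_right hBX
    have hIX : (A ∩ B) ∪ X ⊆ M.E := union_subset (inter_subset_left.trans hAE) hXE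
    have hUX : (A ∪ B) ∪ X ⊆ M.E := union_subset (union_subset hAE hBE) hXE
    have h3 : M.rk X ≤ M.rk ((A ∩ B) ∪ X) := M.rk_mono X _ subset_union_right hIX
    have h4 : M.rk X ≤ M.rk ((A ∪ B) ∪ X) := M.rk_mono X _ subset_union_right hUX
    show M.rk ((A ∪ B) ∪ X) - M.rk X + (M.rk ((A ∩ B) ∪ X) - M.rk X) ≤
      (M.rk (A ∪ X) - M.rk X) + (M.rk (B ∪ X) - M.rk X)
    omega

/-- The restriction `M|Y`. -/
def restrict (M : FinMatroid α) (Y : Finset α) (hY : Y ⊆ M.E) : FinMatroid α where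
  E := Y
  rk := M.rk
  rk_le_card := fun A hA => M.rk_le_card A (hA.trans hY)
  rk_mono := fun A B hAB hB => M.rk_mono A B hAB (hB.trans hY)
  rk_submod := fun A B hA hB => M.rk_submod A B (hA.trans hY) (hB.trans hY)

/-- `M` is binary: it is the matroid of linear dependence of a family of
vectors over the field with two elements. -/
def IsBinary (M : FinMatroid α) : Prop :=
  ∃ (m : ℕ) (φ : α → (Fin m → ZMod 2)),
    ∀ A : Finset α, A ⊆ M.E →
      M.rk A = Module.finrank (ZMod 2) (Submodule.span (ZMod 2) (φ '' (A : Set α)))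

def Simple (M : FinMatroid α) : Prop :=
  (∀ e ∈ M.E, M.rk {e} = 1) ∧
    ∀ e ∈ M.E, ∀ f ∈ M.E, e ≠ f → M.rk ({e, f} : Finset α) = 2

def NoIsthmus (M : FinMatroid α) : Prop :=
  ∀ e ∈ M.E, M.rk (M.E.erase e) = M.rk M.E

def IsMinDist (M : FinMatroid α) (d : ℕ) : Prop :=
  (∃ X ⊆ M.E, M.rk (M.E \ X) < M.rk M.E ∧ X.card = d) ∧
    ∀ X ⊆ M.E, M.rk (M.E \ X) < M.rk M.E → d ≤ X.card

def IsAtomCF (M : FinMatroid α) (Z : Finset α) : Prop :=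
  M.IsCyclicFlat Z ∧ Z ≠ ∅ ∧ ¬ ∃ Z', M.IsCyclicFlat Z' ∧ ∅ ⊂ Z' ∧ Z' ⊂ Z

def IsCoatomCF (M : FinMatroid α) (Z : Finset α) : Prop :=
  M.IsCyclicFlat Z ∧ Z ⊂ M.E ∧ ¬ ∃ Z', M.IsCyclicFlat Z' ∧ Z ⊂ Z' ∧ Z' ⊂ M.E

def IsCircuit (M : FinMatroid α) (C : Finset α) : Prop :=
  C ⊆ M.E ∧ M.rk C < C.card ∧ ∀ D ⊂ C, M.rk D = D.card

end FinMatroid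

/-!
Ranks in `M|Y/X` are ranks in `M` of sets containing `X`, shifted by `ρ(X)`. Hence the closure
and cyclic operators of the minor at `Z ⊆ Y − X` are `cl(Z ∪ X)` and `cyc(Z ∪ X)` with `X`
removed (and the closure cut down to `Y`). Since `Y` is a flat, `cl(Z ∪ X) ⊆ Y`; since `X` is
cyclic and `cyc` is monotone (by submodularity), `X ⊆ cyc(Z ∪ X)`. So nothing is lost in
removing `X`, and `Z` is fixed by both operators of the minor iff `Z ∪ X` is fixed by those
of `M`.
-/

theorem Finset.sdiff_eq_iff_eq_union {α : Type*} [DecidableEq α] {S X Z : Finset α}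
    (hXS : X ⊆ S) (hZX : Disjoint Z X) : S \ X = Z ↔ S = Z ∪ X := by
  constructor
  · rintro rfl
    exact (sdiff_union_of_subset hXS).symm
  · rintro rfl
    exact union_sdiff_cancel_right hZX

namespace FinMatroid

variable {α : Type*} [DecidableEq α] (M : FinMatroid α)

theorem rk_insert_eq_of_subset {A B : Finset α} {e : α} (hAB : A ⊆ B) (hB : B ⊆ M.E)
    (he : e ∈ M.E) (h : M.rk (insert e A) = M.rk A) : M.rk (insert e B) = M.rk B := by
  by_cases heB : e ∈ B
  · rw [insert_eq_self.mpr heB]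
  have hsub := M.rk_submod (insert e A) B (insert_subset he (hAB.trans hB)) hB
  rw [insert_union, union_eq_right.mpr hAB, insert_inter_of_notMem heB,
    inter_eq_left.mpr hAB, h] at hsub
  have := M.rk_mono B (insert e B) (subset_insert e B) (insert_subset he hB)
  omega

theorem rk_erase_eq_of_subset {A B : Finset α} {e : α} (he : e ∈ A) (hAB : A ⊆ B)
    (hB : B ⊆ M.E) (h : M.rk (A.erase e) = M.rk A) : M.rk (B.erase e) = M.rk B := by
  have hsub := M.rk_submod (B.erase e) A ((erase_subset e B).trans hB) (hAB.trans hB)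
  rw [erase_union_of_mem he, union_eq_left.mpr hAB, erase_inter, inter_eq_right.mpr hAB,
    h] at hsub
  have := M.rk_mono (B.erase e) B (erase_subset e B) hB
  omega

theorem subset_cl {A : Finset α} (hA : A ⊆ M.E) : A ⊆ M.cl A := fun e he =>
  mem_filter.mpr ⟨hA he, by rw [insert_eq_self.mpr he]⟩

theorem cl_subset_cl {A B : Finset α} (hAB : A ⊆ B) (hB : B ⊆ M.E) : M.cl A ⊆ M.cl B :=
  fun e he => by
    obtain ⟨heE, hrk⟩ := mem_filter.mp he
    exact mem_filter.mpr ⟨heE, M.rk_insert_eq_of_subset hAB hB heE hrk⟩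

variable {M} in
theorem IsFlat.cl_subset {F A : Finset α} (hF : M.IsFlat F) (hAF : A ⊆ F) : M.cl A ⊆ F :=
  hF.2 ▸ M.cl_subset_cl hAF hF.1

theorem cyc_subset_cyc {A B : Finset α} (hAB : A ⊆ B) (hB : B ⊆ M.E) : M.cyc A ⊆ M.cyc B :=
  fun e he => by
    obtain ⟨heA, hrk⟩ := mem_filter.mp he
    exact mem_filter.mpr ⟨hAB heA, M.rk_erase_eq_of_subset heA hAB hB hrk⟩

variable {M} in
theorem IsCyclic.subset_cyc {U A : Finset α} (hU : M.IsCyclic U) (hUA : U ⊆ A)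
    (hA : A ⊆ M.E) : U ⊆ M.cyc A :=
  hU.2 ▸ M.cyc_subset_cyc hUA hA

section minor

variable {X Y : Finset α} (hXY : X ⊆ Y) (hY : Y ⊆ M.E)

theorem minor_E : (M.minor X Y hXY hY).E = Y \ X := rfl

theorem minor_rk (A : Finset α) : (M.minor X Y hXY hY).rk A = M.rk (A ∪ X) - M.rk X := rfl

theorem cl_minor {A : Finset α} (hA : A ⊆ Y \ X) :
    (M.minor X Y hXY hY).cl A = (Y \ X) ∩ M.cl (A ∪ X) := by
  have hAX : A ∪ X ⊆ M.E := union_subset (hA.trans (sdiff_subset.trans hY)) (hXY.trans hY)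
  ext e
  simp only [cl, minor_E, minor_rk, mem_inter, mem_filter, insert_union]
  refine and_congr_right fun he => ?_
  have heE : e ∈ M.E := hY (mem_sdiff.mp he).1
  have h₁ := M.rk_mono X (A ∪ X) subset_union_right hAX
  have h₂ := M.rk_mono (A ∪ X) _ (subset_insert e _) (insert_subset heE hAX)
  exact ⟨fun h => ⟨heE, by omega⟩, fun h => by omega⟩

theorem cyc_minor {A : Finset α} (hA : A ⊆ Y \ X) :
    (M.minor X Y hXY hY).cyc A = M.cyc (A ∪ X) \ X := by
  have hAX : A ∪ X ⊆ M.E := union_subset (hA.trans (sdiff_subset.trans hY)) (hXY.trans hY)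
  ext e
  simp only [cyc, mem_filter, mem_sdiff, mem_union]
  rw [minor_rk, minor_rk]
  by_cases heA : e ∈ A
  · have heX : e ∉ X := (mem_sdiff.mp (hA heA)).2
    rw [erase_union_distrib, erase_eq_of_notMem heX]
    have hsub : A.erase e ∪ X ⊆ A ∪ X := union_subset_union (erase_subset e A) subset_rfl
    have h₁ := M.rk_mono X _ subset_union_right (hsub.trans hAX)
    have h₂ := M.rk_mono _ (A ∪ X) hsub hAX
    simp only [heA, heX, true_or, true_and, not_false_eq_true, and_true]
    omega
  · tauto

end minor

theorem isCyclicFlat_minor_iff {X Y Z : Finset α} (hXY : X ⊆ Y) (hX : M.IsCyclic X)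
    (hY : M.IsFlat Y) (hZ : Z ⊆ Y \ X) :
    (M.minor X Y hXY hY.1).IsCyclicFlat Z ↔ M.IsCyclicFlat (Z ∪ X) := by
  have hZXY : Z ∪ X ⊆ Y := union_subset (hZ.trans sdiff_subset) hXY
  have hZXE : Z ∪ X ⊆ M.E := hZXY.trans hY.1
  have hZX : Disjoint Z X := disjoint_of_subset_left hZ sdiff_disjoint
  have hcl : (M.minor X Y hXY hY.1).cl Z = M.cl (Z ∪ X) \ X := by
    rw [cl_minor M hXY hY.1 hZ, sdiff_inter_right_comm, inter_eq_right.mpr (hY.cl_subset hZXY)]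
  rw [IsCyclicFlat, IsCyclicFlat, hcl, cyc_minor M hXY hY.1 hZ,
    sdiff_eq_iff_eq_union (subset_union_right.trans (M.subset_cl hZXE)) hZX,
    sdiff_eq_iff_eq_union (hX.subset_cyc subset_union_right hZXE) hZX, minor_E]
  simp only [hZ, hZXE, true_and]

end FinMatroid

/-- For `X ⊆ Y ⊆ E` with `X` a cyclic set and `Y` a flat of `M`, the
cyclic flats of the minor `M|Y/X` are exactly the sets `Z ⊆ Y − X` with `Z ∪ X` a
cyclic flat of `M`, and the rank of such a `Z` in `M|Y/X` equals `ρ(Z ∪ X) − ρ(X)`. -/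
theorem cyclicFlats_of_minor {α : Type*} [DecidableEq α] (M : FinMatroid α)
    (X Y : Finset α) (hXY : X ⊆ Y) (hX : M.IsCyclic X) (hY : M.IsFlat Y) (Z : Finset α) :
    ((M.minor X Y hXY hY.1).IsCyclicFlat Z ↔ Z ⊆ Y \ X ∧ M.IsCyclicFlat (Z ∪ X)) ∧
      ((M.minor X Y hXY hY.1).IsCyclicFlat Z →
        (M.minor X Y hXY hY.1).rk Z = M.rk (Z ∪ X) - M.rk X) := by
  refine ⟨⟨fun h => ⟨h.1, ?_⟩, fun ⟨hZ, h⟩ => ?_⟩, fun _ => rfl⟩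
  · exact (M.isCyclicFlat_minor_iff hXY hX hY h.1).mp h
  · exact (M.isCyclicFlat_minor_iff hXY hX hY hZ).mpr h
end

section
/- Let M = (E, ρ) be a matroid and let X and Y be cyclic flats of M with X ⊊ Y such that there is no cyclic flat Z of M with X ⊊ Z ⊊ Y (i.e., Y covers X in the lattice of cyclic flats). Then the minor M|Y/X is the uniform matroid of rank k = ρ(Y) − ρ(X) on the n = |Y − X| elements of Y − X; that is, for every subset A ⊆ Y − X one has ρ(A ∪ X) − ρ(X) = min(|A|, ρ(Y) − ρ(X)). -/
open Finset

namespace FinMatroid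

variable {α : Type*} [DecidableEq α]

/-- If adding `e` does not increase the rank of `S`, it does not increase the
rank of any superset `T` of `S`. -/
lemma rk_insert_of_rk_insert (M : FinMatroid α) {S T : Finset α} {e : α}
    (hST : S ⊆ T) (hT : T ⊆ M.E) (he : e ∈ M.E)
    (h : M.rk (insert e S) = M.rk S) : M.rk (insert e T) = M.rk T := by
  have hS : S ⊆ M.E := hST.trans hT
  have hiS : insert e S ⊆ M.E := insert_subset he hS
  have hsub := M.rk_submod (insert e S) T hiS hT
  have hu : insert e S ∪ T = insert e T := by
    rw [insert_union, union_eq_right.mpr hST]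
  rw [hu] at hsub
  have hSi : S ⊆ insert e S ∩ T := subset_inter (subset_insert _ _) hST
  have h1 : M.rk S ≤ M.rk (insert e S ∩ T) :=
    M.rk_mono _ _ hSi (inter_subset_right.trans hT)
  have h2 : M.rk T ≤ M.rk (insert e T) :=
    M.rk_mono _ _ (subset_insert _ _) (insert_subset he hT)
  omega

lemma subset_cl_s2 (M : FinMatroid α) {S : Finset α} (hS : S ⊆ M.E) : S ⊆ M.cl S := by
  intro e he
  exact mem_filter.mpr ⟨hS he, by rw [insert_eq_self.mpr he]⟩

lemma rk_between (M : FinMatroid α) {S : Finset α} (hS : S ⊆ M.E) :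
    ∀ T, S ⊆ T → T ⊆ M.cl S → M.rk T = M.rk S := by
  intro T
  induction T using Finset.strongInduction with
  | _ T ih =>
    intro hST hT
    rcases hST.eq_or_ssubset with h | h
    · rw [← h]
    · obtain ⟨e, heT, heS⟩ := exists_of_ssubset h
      have hclE : M.cl S ⊆ M.E := filter_subset _ _
      have hSe : S ⊆ T.erase e := subset_erase.mpr ⟨hST, heS⟩
      have hTeE : T.erase e ⊆ M.E := ((erase_subset _ _).trans hT).trans hclE
      have h1 : M.rk (T.erase e) = M.rk S :=
        ih _ (erase_ssubset heT) hSe ((erase_subset _ _).trans hT)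
      have he := mem_filter.mp (hT heT)
      have h2 := M.rk_insert_of_rk_insert hSe hTeE he.1 he.2
      rw [insert_erase heT] at h2
      rw [h2, h1]

lemma rk_cl (M : FinMatroid α) {S : Finset α} (hS : S ⊆ M.E) :
    M.rk (M.cl S) = M.rk S :=
  M.rk_between hS _ (M.subset_cl_s2 hS) Subset.rfl

lemma cl_cl (M : FinMatroid α) {S : Finset α} (hS : S ⊆ M.E) :
    M.cl (M.cl S) = M.cl S := by
  have hclE : M.cl S ⊆ M.E := filter_subset _ _
  have mem_cl : ∀ (U : Finset α) (e : α),
      e ∈ M.cl U ↔ e ∈ M.E ∧ M.rk (insert e U) = M.rk U := fun U e => mem_filter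
  ext e
  simp only [mem_cl]
  constructor
  · rintro ⟨heE, hrk⟩
    refine ⟨heE, le_antisymm ?_ ?_⟩
    · calc M.rk (insert e S) ≤ M.rk (insert e (M.cl S)) :=
            M.rk_mono _ _ (insert_subset_insert _ (M.subset_cl_s2 hS))
              (insert_subset heE hclE)
        _ = M.rk (M.cl S) := hrk
        _ = M.rk S := M.rk_cl hS
    · exact M.rk_mono _ _ (subset_insert _ _) (insert_subset heE hS)
  · rintro ⟨heE, hrk⟩
    have : e ∈ M.cl S := mem_filter.mpr ⟨heE, hrk⟩
    exact ⟨heE, by rw [insert_eq_self.mpr this]⟩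

end FinMatroid

/-- If `X ⊊ Y` are cyclic flats of `M` with no cyclic flat strictly in
between, then `M|Y/X` is the uniform matroid of rank `ρ(Y) − ρ(X)` on `Y − X`:
for every `A ⊆ Y − X` one has `ρ(A ∪ X) − ρ(X) = min(|A|, ρ(Y) − ρ(X))`. -/
theorem minor_of_covering_is_uniform {α : Type*} [DecidableEq α] (M : FinMatroid α)
    (X Y : Finset α) (hX : M.IsCyclicFlat X) (hY : M.IsCyclicFlat Y) (hXY : X ⊂ Y)
    (hcov : ¬ ∃ Z, M.IsCyclicFlat Z ∧ X ⊂ Z ∧ Z ⊂ Y) :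
    ∀ A ⊆ Y \ X, M.rk (A ∪ X) - M.rk X = min A.card (M.rk Y - M.rk X) := by
  obtain ⟨hXE, hclX, hcycX⟩ := hX
  obtain ⟨hYE, hclY, hcycY⟩ := hY
  have mem_cl : ∀ (U : Finset α) (e : α),
      e ∈ M.cl U ↔ e ∈ M.E ∧ M.rk (insert e U) = M.rk U := fun U e => mem_filter
  have mem_cyc : ∀ (U : Finset α) (e : α),
      e ∈ M.cyc U ↔ e ∈ U ∧ M.rk (U.erase e) = M.rk U := fun U e => mem_filter
  -- Key claim: no subset of Y \ X is both dependent and non-spanning in the minor.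
  have key : ∀ A ⊆ Y \ X,
      ¬ (M.rk (A ∪ X) < M.rk X + A.card ∧ M.rk (A ∪ X) < M.rk Y) := by
    rintro A hA ⟨hdep, hnsp⟩
    have hAY : A ⊆ Y := fun a ha => (mem_sdiff.mp (hA ha)).1
    have hAE : A ⊆ M.E := hAY.trans hYE
    -- pick a minimal dependent subset C of A
    set s : Finset (Finset α) :=
      A.powerset.filter (fun B => M.rk (B ∪ X) < M.rk X + B.card) with hs
    have hAs : A ∈ s := mem_filter.mpr ⟨mem_powerset.mpr Subset.rfl, hdep⟩
    obtain ⟨C, hCs, hCmin⟩ := s.exists_min_image card ⟨A, hAs⟩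
    obtain ⟨hCA', hCdep⟩ := mem_filter.mp hCs
    have hCA : C ⊆ A := mem_powerset.mp hCA'
    have hCYX : C ⊆ Y \ X := hCA.trans hA
    have hCY : C ⊆ Y := hCA.trans hAY
    have hCE : C ⊆ M.E := hCY.trans hYE
    have hCX : C ∪ X ⊆ M.E := union_subset hCE hXE
    have hCXY : C ∪ X ⊆ Y := union_subset hCY hXY.subset
    have hXle : M.rk X ≤ M.rk (C ∪ X) := M.rk_mono _ _ subset_union_right hCX
    have hCne : C.Nonempty := by
      rcases C.eq_empty_or_nonempty with h | h
      · subst h; simp at hCdep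
      · exact h
    -- minimality: removing an element of C does not drop the rank of C ∪ X
    have herase : ∀ e ∈ C, M.rk (C.erase e ∪ X) = M.rk (C ∪ X) := by
      intro e heC
      have h1 : C.erase e ∉ s := by
        intro h
        have := hCmin _ h
        have hlt := card_erase_lt_of_mem heC
        omega
      have h2 : ¬ M.rk (C.erase e ∪ X) < M.rk X + (C.erase e).card := by
        intro h
        exact h1 (mem_filter.mpr ⟨mem_powerset.mpr ((erase_subset _ _).trans hCA), h⟩)
      have h3 : M.rk (C.erase e ∪ X) ≤ M.rk (C ∪ X) :=
        M.rk_mono _ _ (union_subset_union (erase_subset _ _) Subset.rfl) hCX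
      have h4 := card_erase_of_mem heC
      have h5 : 1 ≤ C.card := card_pos.mpr hCne
      omega
    -- Z := cl (C ∪ X) is a cyclic flat with X ⊂ Z ⊂ Y
    set Z := M.cl (C ∪ X) with hZ
    have hZE : Z ⊆ M.E := filter_subset _ _
    have hCXZ : C ∪ X ⊆ Z := M.subset_cl_s2 hCX
    have hrkZ : M.rk Z = M.rk (C ∪ X) := M.rk_cl hCX
    have hZY : Z ⊆ Y := by
      intro e heZ
      obtain ⟨heE, hrk⟩ := (mem_cl _ e).mp heZ
      have := M.rk_insert_of_rk_insert hCXY hYE heE hrk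
      rw [← hclY]
      exact (mem_cl _ e).mpr ⟨heE, this⟩
    have hcyclicZ : M.IsCyclicFlat Z := by
      refine ⟨hZE, M.cl_cl hCX, ?_⟩
      apply Finset.filter_true_of_mem
      intro e heZ
      have heE : e ∈ M.E := hZE heZ
      refine le_antisymm (M.rk_mono _ _ (erase_subset _ _) hZE) ?_
      by_cases heC : e ∈ C
      · -- e ∈ C : use minimality of C
        have hsub : C.erase e ∪ X ⊆ Z.erase e := by
          apply subset_erase.mpr
          constructor
          · exact (union_subset_union (erase_subset _ _) Subset.rfl).trans hCXZ
          · simp only [mem_union, not_or]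
            exact ⟨notMem_erase _ _, (mem_sdiff.mp (hCYX heC)).2⟩
        calc M.rk Z = M.rk (C.erase e ∪ X) := by rw [hrkZ, herase e heC]
          _ ≤ M.rk (Z.erase e) := M.rk_mono _ _ hsub ((erase_subset _ _).trans hZE)
      · by_cases heX : e ∈ X
        · -- e ∈ X : use that X is cyclic
          have hXe : M.rk (X.erase e) = M.rk X := by
            have : e ∈ M.cyc X := by rw [hcycX]; exact heX
            exact ((mem_cyc _ e).mp this).2
          have hins : M.rk (insert e (X.erase e)) = M.rk (X.erase e) := by
            rw [insert_erase heX, hXe]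
          have hsubE : C ∪ X.erase e ⊆ M.E :=
            union_subset hCE ((erase_subset _ _).trans hXE)
          have h6 := M.rk_insert_of_rk_insert
            (subset_union_right : X.erase e ⊆ C ∪ X.erase e) hsubE heE hins
          have hins2 : insert e (C ∪ X.erase e) = C ∪ X := by
            rw [union_comm C, ← insert_union, insert_erase heX, union_comm]
          rw [hins2] at h6
          have hsub : C ∪ X.erase e ⊆ Z.erase e := by
            apply subset_erase.mpr
            refine ⟨(union_subset_union Subset.rfl (erase_subset _ _)).trans hCXZ, ?_⟩
            simp only [mem_union, not_or]
            exact ⟨heC, notMem_erase _ _⟩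
          calc M.rk Z = M.rk (C ∪ X.erase e) := by rw [hrkZ, ← h6]
            _ ≤ M.rk (Z.erase e) := M.rk_mono _ _ hsub ((erase_subset _ _).trans hZE)
        · -- e ∉ C ∪ X : C ∪ X survives inside Z.erase e
          have hsub : C ∪ X ⊆ Z.erase e := by
            apply subset_erase.mpr
            refine ⟨hCXZ, ?_⟩
            simp only [mem_union, not_or]
            exact ⟨heC, heX⟩
          calc M.rk Z = M.rk (C ∪ X) := hrkZ
            _ ≤ M.rk (Z.erase e) := M.rk_mono _ _ hsub ((erase_subset _ _).trans hZE)
    -- X ⊂ Z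
    obtain ⟨c, hcC⟩ := hCne
    have hXZ : X ⊂ Z := by
      refine ssubset_iff_of_subset (subset_union_right.trans hCXZ) |>.mpr ?_
      exact ⟨c, hCXZ (mem_union_left _ hcC), (mem_sdiff.mp (hCYX hcC)).2⟩
    -- Z ⊂ Y
    have hCltY : M.rk (C ∪ X) < M.rk Y := by
      have : M.rk (C ∪ X) ≤ M.rk (A ∪ X) :=
        M.rk_mono _ _ (union_subset_union hCA Subset.rfl)
          (union_subset hAE hXE)
      omega
    have hZY' : Z ⊂ Y := by
      refine Finset.ssubset_iff_subset_ne.mpr ⟨hZY, fun h => ?_⟩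
      rw [h] at hrkZ
      omega
    exact hcov ⟨Z, hcyclicZ, hXZ, hZY'⟩
  -- Conclude using the bounds
  intro A hA
  have hAY : A ⊆ Y := fun a ha => (mem_sdiff.mp (hA ha)).1
  have hAE : A ⊆ M.E := hAY.trans hYE
  have hAXE : A ∪ X ⊆ M.E := union_subset hAE hXE
  have h1 : M.rk X ≤ M.rk (A ∪ X) := M.rk_mono _ _ subset_union_right hAXE
  have h2 : M.rk (A ∪ X) ≤ M.rk Y :=
    M.rk_mono _ _ (union_subset hAY hXY.subset) hYE
  have h3 : M.rk X ≤ M.rk Y := M.rk_mono _ _ hXY.subset hYE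
  have h4 : M.rk (A ∪ X) ≤ M.rk X + A.card := by
    have hsub := M.rk_submod A X hAE hXE
    have := M.rk_le_card A hAE
    omega
  have h5 := key A hA
  omega
end

section
/- Let M = (E, ρ) be a matroid and let Z, Z₁, Z₂ be cyclic flats of M with Z ⊆ Z₁, Z ⊆ Z₂, Z₁ ⊄ Z₂, and ρ(Z₁) = ρ(Z) + 1. Then Z₁ ∩ Z₂ = Z. -/
open Finset

/-- If `rk (insert f A) = rk A` and `A ⊆ B`, then `rk (insert f B) = rk B`. -/
lemma rk_insert_eq_of_subset {α : Type*} [DecidableEq α] (M : FinMatroid α)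
    {A B : Finset α} {f : α} (hAB : A ⊆ B) (hB : B ⊆ M.E) (hf : f ∈ M.E)
    (h : M.rk (insert f A) = M.rk A) : M.rk (insert f B) = M.rk B := by
  have hfB : insert f B ⊆ M.E := insert_subset hf hB
  have hsub := M.rk_submod (insert f A) B (insert_subset hf (hAB.trans hB)) hB
  have e1 : insert f A ∪ B = insert f B := by
    ext x; simp only [mem_union, mem_insert]
    constructor
    · rintro ((h | h) | h)
      · exact Or.inl h
      · exact Or.inr (hAB h)
      · exact Or.inr h
    · rintro (h | h) <;> tauto
  have hA : A ⊆ insert f A ∩ B := subset_inter (subset_insert _ _) hAB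
  have h2 : M.rk A ≤ M.rk (insert f A ∩ B) :=
    M.rk_mono _ _ hA (inter_subset_right.trans hB)
  have h3 : M.rk B ≤ M.rk (insert f B) := M.rk_mono _ _ (subset_insert _ _) hfB
  rw [e1, h] at hsub
  omega

/-- If `Z, Z₁, Z₂` are cyclic flats with `Z ⊆ Z₁`, `Z ⊆ Z₂`,
`Z₁ ⊄ Z₂`, and `ρ(Z₁) = ρ(Z) + 1`, then `Z₁ ∩ Z₂ = Z`. -/
theorem inter_eq_of_rank_succ {α : Type*} [DecidableEq α] (M : FinMatroid α)
    (Z Z1 Z2 : Finset α)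
    (hZ : M.IsCyclicFlat Z) (h1 : M.IsCyclicFlat Z1) (h2 : M.IsCyclicFlat Z2)
    (hZ1 : Z ⊆ Z1) (hZ2 : Z ⊆ Z2) (hns : ¬ Z1 ⊆ Z2)
    (hr : M.rk Z1 = M.rk Z + 1) :
    Z1 ∩ Z2 = Z := by
  obtain ⟨hZE, hZcl, -⟩ := hZ
  obtain ⟨h1E, h1cl, -⟩ := h1
  obtain ⟨h2E, h2cl, -⟩ := h2
  by_contra hne
  -- obtain e ∈ Z1 ∩ Z2 with e ∉ Z
  have hsub : Z ⊆ Z1 ∩ Z2 := subset_inter hZ1 hZ2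
  obtain ⟨e, heI, heZ⟩ : ∃ e ∈ Z1 ∩ Z2, e ∉ Z := by
    by_contra h
    push_neg at h
    exact hne (Subset.antisymm h hsub)
  have heZ1 : e ∈ Z1 := (mem_inter.mp heI).1
  have heZ2 : e ∈ Z2 := (mem_inter.mp heI).2
  have heE : e ∈ M.E := h1E heZ1
  set S : Finset α := insert e Z with hS
  have hSZ1 : S ⊆ Z1 := insert_subset heZ1 hZ1
  have hSZ2 : S ⊆ Z2 := insert_subset heZ2 hZ2
  have hSE : S ⊆ M.E := hSZ1.trans h1E
  -- rk S = rk Z + 1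
  have hne' : M.rk S ≠ M.rk Z := by
    intro h
    have : e ∈ M.cl Z := mem_filter.mpr ⟨heE, h⟩
    rw [hZcl] at this
    exact heZ this
  have hle : M.rk Z ≤ M.rk S := M.rk_mono _ _ (subset_insert _ _) hSE
  have hleS : M.rk S ≤ M.rk Z1 := M.rk_mono _ _ hSZ1 h1E
  have hrS : M.rk S = M.rk Z1 := by omega
  -- every f ∈ Z1 is in cl S, hence in cl Z2 = Z2
  apply hns
  intro f hf
  have hfE : f ∈ M.E := h1E hf
  have hfS : M.rk (insert f S) = M.rk S := by
    have h1' : M.rk S ≤ M.rk (insert f S) :=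
      M.rk_mono _ _ (subset_insert _ _) (insert_subset hfE hSE)
    have h2' : M.rk (insert f S) ≤ M.rk Z1 :=
      M.rk_mono _ _ (insert_subset hf hSZ1) h1E
    omega
  have : M.rk (insert f Z2) = M.rk Z2 :=
    rk_insert_eq_of_subset M hSZ2 h2E hfE hfS
  have : f ∈ M.cl Z2 := mem_filter.mpr ⟨hfE, this⟩
  rwa [h2cl] at this
end

section
/- Let M = (E, ρ) be a matroid, A ⊆ E, and let Z be a cyclic flat of M satisfying ρ(Z) + |A − Z| = ρ(A). Then cl(cyc(A)) ⊆ Z ⊆ cyc(cl(A)). -/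
open Finset

namespace FinMatroid

variable {α : Type*} [DecidableEq α]

lemma rk_insert_le' (M : FinMatroid α) (W : Finset α) (e : α) (hW : W ⊆ M.E)
    (he : e ∈ M.E) : M.rk (insert e W) ≤ M.rk W + 1 := by
  have h := M.rk_submod {e} W (by simpa using he) hW
  have h2 : M.rk {e} ≤ 1 := by simpa using M.rk_le_card {e} (by simpa using he)
  rw [← Finset.insert_eq] at h
  omega

lemma rk_union_card (M : FinMatroid α) (Y : Finset α) (hY : Y ⊆ M.E) :
    ∀ X : Finset α, X ⊆ M.E → M.rk (X ∪ Y) ≤ M.rk Y + (X \ Y).card := by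
  intro X
  induction X using Finset.induction_on with
  | empty => intro _; simp
  | @insert a X ha ih =>
    intro hX
    have haE : a ∈ M.E := hX (mem_insert_self a X)
    have hXE : X ⊆ M.E := (subset_insert a X).trans hX
    have hXY : X ∪ Y ⊆ M.E := union_subset hXE hY
    rw [insert_union]
    by_cases hay : a ∈ Y
    · rw [insert_eq_self.mpr (mem_union_right _ hay),
        insert_sdiff_of_mem _ hay]
      exact ih hXE
    · have h1 : M.rk (insert a (X ∪ Y)) ≤ M.rk (X ∪ Y) + 1 :=
        M.rk_insert_le' _ a hXY haE
      have h2 : insert a X \ Y = insert a (X \ Y) :=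
        insert_sdiff_of_notMem _ hay
      have h3 : (insert a (X \ Y)).card = (X \ Y).card + 1 :=
        card_insert_of_notMem (fun h => ha (mem_sdiff.mp h).1)
      have := ih hXE
      rw [h2, h3]
      omega

lemma rk_insert_eq_of_subset_s10 (M : FinMatroid α) {X Y : Finset α} {e : α}
    (hXY : X ⊆ Y) (hY : Y ⊆ M.E) (he : e ∈ M.E)
    (hx : M.rk (insert e X) = M.rk X) : M.rk (insert e Y) = M.rk Y := by
  have hXE : X ⊆ M.E := hXY.trans hY
  have hsub := M.rk_submod (insert e X) Y (insert_subset he hXE) hY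
  have hu : insert e X ∪ Y = insert e Y := by
    rw [insert_union, union_eq_right.mpr hXY]
  have h1 : M.rk X ≤ M.rk (insert e X ∩ Y) :=
    M.rk_mono _ _ (subset_inter (subset_insert e X) hXY)
      (inter_subset_right.trans hY)
  have h2 : M.rk Y ≤ M.rk (insert e Y) :=
    M.rk_mono _ _ (subset_insert e Y) (insert_subset he hY)
  rw [hu] at hsub
  omega

end FinMatroid

/-- If `Z` is a cyclic flat with `ρ(Z) + |A − Z| = ρ(A)`, then
`cl(cyc(A)) ⊆ Z ⊆ cyc(cl(A))`. -/
theorem cyclicFlat_mem_interval {α : Type*} [DecidableEq α] (M : FinMatroid α)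
    (A : Finset α) (hA : A ⊆ M.E) (Z : Finset α) (hZ : M.IsCyclicFlat Z)
    (h : M.rk Z + (A \ Z).card = M.rk A) :
    M.cl (M.cyc A) ⊆ Z ∧ Z ⊆ M.cyc (M.cl A) := by
  obtain ⟨hZE, hZcl, hZcyc⟩ := hZ
  have hAuZ : M.rk (A ∪ Z) ≤ M.rk Z + (A \ Z).card := M.rk_union_card Z hZE A hA
  have hAle : M.rk A ≤ M.rk (A ∪ Z) :=
    M.rk_mono _ _ subset_union_left (union_subset hA hZE)
  have hAuZ' : M.rk (A ∪ Z) = M.rk A := by omega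
  have hZclA : Z ⊆ M.cl A := by
    intro z hz
    refine mem_filter.mpr ⟨hZE hz, ?_⟩
    have h1 : M.rk A ≤ M.rk (insert z A) :=
      M.rk_mono _ _ (subset_insert _ _) (insert_subset (hZE hz) hA)
    have h2 : M.rk (insert z A) ≤ M.rk (A ∪ Z) :=
      M.rk_mono _ _ (insert_subset (mem_union_right _ hz) subset_union_left)
        (union_subset hA hZE)
    omega
  have hcycZ : M.cyc A ⊆ Z := by
    intro e he
    obtain ⟨heA, hrk⟩ := mem_filter.mp he
    by_contra heZ
    have heAZ : e ∈ A \ Z := mem_sdiff.mpr ⟨heA, heZ⟩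
    have hAeE : A.erase e ⊆ M.E := (erase_subset e A).trans hA
    have h1 : M.rk (A.erase e ∪ Z) ≤ M.rk Z + ((A.erase e) \ Z).card :=
      M.rk_union_card Z hZE _ hAeE
    have h2 : (A.erase e) \ Z = (A \ Z).erase e := by
      ext x
      simp only [mem_sdiff, mem_erase]
      tauto
    have h3 : ((A \ Z).erase e).card = (A \ Z).card - 1 := card_erase_of_mem heAZ
    have h4 : M.rk (A.erase e) ≤ M.rk (A.erase e ∪ Z) :=
      M.rk_mono _ _ subset_union_left (union_subset hAeE hZE)
    have h5 : 1 ≤ (A \ Z).card := card_pos.mpr ⟨e, heAZ⟩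
    rw [h2, h3] at h1
    omega
  constructor
  · intro e he
    obtain ⟨heE, hrk⟩ := mem_filter.mp he
    have : M.rk (insert e Z) = M.rk Z :=
      M.rk_insert_eq_of_subset_s10 hcycZ hZE heE hrk
    rw [← hZcl]
    exact mem_filter.mpr ⟨heE, this⟩
  · intro z hz
    have hzcl : z ∈ M.cl A := hZclA hz
    refine mem_filter.mpr ⟨hzcl, ?_⟩
    have hz' : z ∈ M.cyc Z := by rw [hZcyc]; exact hz
    have hcyc : M.rk (Z.erase z) = M.rk Z := (mem_filter.mp hz').2
    have hins : M.rk (insert z (Z.erase z)) = M.rk (Z.erase z) := by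
      rw [insert_erase hz, hcyc]
    have hsub : Z.erase z ⊆ (M.cl A).erase z := fun x hx =>
      mem_erase.mpr ⟨(mem_erase.mp hx).1, hZclA (mem_erase.mp hx).2⟩
    have hclE : M.cl A ⊆ M.E := filter_subset _ _
    have hfin := M.rk_insert_eq_of_subset_s10 hsub ((erase_subset _ _).trans hclE)
      (hZE hz) hins
    rw [insert_erase hzcl] at hfin
    exact hfin.symm
end
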